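/- Let z = x + iy with x ≥ 1, and ℓ ∈ ℕ₀ such that Σ_{j=0}^{ℓ} arctan(y/(x+j)) ∈ (-π/2, π/2). Then the polynomial P(t) = Σ_{k=0}^{ℓ} C(z-1+k, k) t^k satisfies |P(t)| ≥ 1 for all t ∈ [0,1]. -/

import Mathlib

open Complex Finset Real

/-- Generalized binomial coefficient `C(z-1+k, k) = (∏_{j=0}^{k-1} (z+j)) / k!`
(equal to `1` for `k = 0`). -/
noncomputable def genBinomProd (z : ℂ) (k : ℕ) : ℂ :=
  (∏ j ∈ range k, (z + j)) / (k.factorial : ℂ)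

/-! Writing `z + j = ‖z + j‖ e^{i arg (z + j)}`, the `k`-th coefficient of `P` is a nonnegative
real times `e^{i θ_k}` with `θ_k = ∑_{j<k} arg (z + j)`. All `arg (z + j)` have the sign of `y`, so
`|θ_k| ≤ |θ_{ℓ+1}| < π/2`, and since `x > 0` the latter sum is the given sum of arctangents. Hence
every term of `P(t)` has nonnegative real part, and `|P(t)| ≥ Re P(t) ≥ 1`, the constant term. -/

theorem Complex.arg_eq_arctan_of_re_pos {w : ℂ} (hw : 0 < w.re) :
    arg w = Real.arctan (w.im / w.re) := by
  obtain ⟨hlo, hhi⟩ := abs_lt.1 (abs_arg_lt_pi_div_two_iff.2 (Or.inl hw))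
  rw [← tan_arg, Real.arctan_tan hlo hhi]

theorem Finset.prod_eq_prod_norm_mul_exp_sum_arg {ι : Type*} (s : Finset ι) (w : ι → ℂ) :
    ∏ i ∈ s, w i = (∏ i ∈ s, ‖w i‖ : ℝ) * exp ((∑ i ∈ s, arg (w i) : ℝ) * I) := by
  conv_lhs => rw [← prod_congr rfl fun i _ => norm_mul_exp_arg_mul_I (w i)]
  rw [prod_mul_distrib, ← Complex.exp_sum, ← sum_mul]
  push_cast
  rfl

theorem Finset.abs_sum_le_abs_sum_of_subset_of_sameSign {ι : Type*} {s t : Finset ι} {f : ι → ℝ}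
    (hst : s ⊆ t) (hf : (∀ i ∈ t, 0 ≤ f i) ∨ ∀ i ∈ t, f i ≤ 0) :
    |∑ i ∈ s, f i| ≤ |∑ i ∈ t, f i| := by
  rcases hf with hf | hf
  · rw [abs_of_nonneg (sum_nonneg fun i hi => hf i (hst hi)), abs_of_nonneg (sum_nonneg hf)]
    exact sum_le_sum_of_subset_of_nonneg hst fun i hi _ => hf i hi
  · rw [abs_of_nonpos (sum_nonpos fun i hi => hf i (hst hi)), abs_of_nonpos (sum_nonpos hf),
      ← sum_neg_distrib, ← sum_neg_distrib]
    exact sum_le_sum_of_subset_of_nonneg hst fun i hi _ => neg_nonneg.2 (hf i hi)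

theorem abs_sum_range_arg_add_natCast_le (z : ℂ) {k n : ℕ} (hkn : k ≤ n) :
    |∑ j ∈ range k, arg (z + j)| ≤ |∑ j ∈ range n, arg (z + j)| := by
  refine abs_sum_le_abs_sum_of_subset_of_sameSign (range_subset_range.2 hkn) ?_
  rcases le_or_gt 0 z.im with hy | hy
  · exact Or.inl fun j _ => arg_nonneg_iff.2 (by simpa using hy)
  · exact Or.inr fun j _ => (arg_neg_iff.2 (by simpa using hy)).le

theorem re_genBinomProd_mul_pow_nonneg (z : ℂ) (k : ℕ) {t : ℝ} (ht : 0 ≤ t)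
    (hθ : |∑ j ∈ range k, arg (z + j)| ≤ π / 2) :
    0 ≤ (genBinomProd z k * (t : ℂ) ^ k).re := by
  have hpolar : genBinomProd z k * (t : ℂ) ^ k =
      ((∏ j ∈ range k, ‖z + j‖) * t ^ k / k.factorial : ℝ) *
        exp ((∑ j ∈ range k, arg (z + j) : ℝ) * I) := by
    rw [genBinomProd, prod_eq_prod_norm_mul_exp_sum_arg]
    push_cast
    ring
  rw [hpolar, re_ofReal_mul, exp_ofReal_mul_I_re]
  exact mul_nonneg (by positivity) (cos_nonneg_of_mem_Icc (abs_le.1 hθ))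

theorem stmt13 (z : ℂ) (hx : 1 ≤ z.re) (ℓ : ℕ)
    (h : (∑ j ∈ range (ℓ + 1), Real.arctan (z.im / (z.re + j))) ∈
      Set.Ioo (-(π / 2)) (π / 2)) :
    ∀ t ∈ Set.Icc (0:ℝ) 1,
      1 ≤ ‖∑ k ∈ range (ℓ + 1), genBinomProd z k * (t : ℂ) ^ k‖ := by
  intro t ht
  have harg : ∑ j ∈ range (ℓ + 1), Real.arctan (z.im / (z.re + j)) =
      ∑ j ∈ range (ℓ + 1), arg (z + j) :=
    sum_congr rfl fun j _ => by
      rw [arg_eq_arctan_of_re_pos (by simp only [add_re, natCast_re]; positivity)]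
      simp
  rw [harg] at h
  have hterm : ∀ k ∈ range (ℓ + 1), 0 ≤ (genBinomProd z k * (t : ℂ) ^ k).re := fun k hk =>
    re_genBinomProd_mul_pow_nonneg z k ht.1 <|
      (abs_sum_range_arg_add_natCast_le z (mem_range.1 hk).le).trans (abs_lt.2 h).le
  calc (1 : ℝ) = (genBinomProd z 0 * (t : ℂ) ^ 0).re := by simp [genBinomProd]
    _ ≤ (∑ k ∈ range (ℓ + 1), genBinomProd z k * (t : ℂ) ^ k).re := by
      rw [re_sum]
      exact single_le_sum hterm (mem_range.2 ℓ.succ_pos)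
    _ ≤ _ := re_le_norm _
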